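/- For a non-empty I ⊆ {1,…,r−1}, if a ∈ I and a < b < n_I(a), then c_I^{-1}(e_b − e_{n_I(a)}) = e_a − e_b; and if i_1 < q ≤ r and t is the unique index in {1,…,r−1} with p_I(t) = q, then c_I^{-1}(e_{i_1} − e_q) = e_t + e_r. -/

import Mathlib

noncomputable section

open Finset

/-- `ee r i` is the standard basis vector `e_i` (1-based index) of `ℝ^r`. -/
def ee (r i : ℕ) : Fin r → ℝ := fun j => if (j : ℕ) + 1 = i then 1 else 0

/-- The type-`D_r` simple roots, 1-based: `α_i = e_i - e_{i+1}` for `i ≤ r-1`,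
`α_r = e_{r-1} + e_r`. -/
def sroot (r i : ℕ) : Fin r → ℝ :=
  if i = r then ee r (r - 1) + ee r r else ee r i - ee r (i + 1)

/-- Root-poset order: `ρ ≤ η` iff `η - ρ` is a non-negative integer combination
of the simple roots. -/
def rootLE (r : ℕ) (ρ η : Fin r → ℝ) : Prop :=
  ∃ m : ℕ → ℕ, η - ρ = ∑ i ∈ Finset.Icc 1 r, (m i : ℝ) • sroot r i

/-- The positive roots of type `D_r`: `e_i ± e_j` for `1 ≤ i < j ≤ r`. -/
def Pos (r : ℕ) : Set (Fin r → ℝ) :=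
  {v | ∃ i j, 1 ≤ i ∧ i < j ∧ j ≤ r ∧ (v = ee r i - ee r j ∨ v = ee r i + ee r j)}

/-- The `i`-th (1-based) coordinate of a vector. -/
def coordN (r : ℕ) (x : Fin r → ℝ) (i : ℕ) : ℝ :=
  ∑ j : Fin r, if (j : ℕ) + 1 = i then x j else 0

/-- The successor map on `I ∪ {r}`: least element of `I ∪ {r}` larger than `a`. -/
def nextI (r : ℕ) (I : Finset ℕ) (a : ℕ) : ℕ :=
  WithTop.untopD r (((insert r I).filter (fun x => a < x)).min)

/-- `min (I ∪ {r})`; equals `min I` for nonempty `I ⊆ {1,…,r-1}` and `r` for `I = ∅`. -/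
def minI (r : ℕ) (I : Finset ℕ) : ℕ := WithTop.untopD r ((insert r I).min)

/-- `max I` (0 if empty). -/
def maxI (I : Finset ℕ) : ℕ := WithBot.unbotD 0 (I.max)

/-- The increasing cycle `p_I` on `I ∪ {r}`, fixing all other points. -/
def pI (r : ℕ) (I : Finset ℕ) (a : ℕ) : ℕ :=
  if a ∈ I then nextI r I a else if a = r then minI r I else a

/-- Images of the basis vectors under `c_I`. -/
def cIb (r : ℕ) (I : Finset ℕ) (j : ℕ) : Fin r → ℝ :=
  if j = r then ee r (minI r I) else -(ee r (pI r I j))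

/-- The signed permutation `c_I`, extended linearly; for `I = ∅` it is `w_0`. -/
def cI (r : ℕ) (I : Finset ℕ) (x : Fin r → ℝ) : Fin r → ℝ :=
  ∑ j ∈ Finset.Icc 1 r, coordN r x j • cIb r I j

/-- Images of the basis vectors under `d_I`. -/
def dIb (r : ℕ) (I : Finset ℕ) (j : ℕ) : Fin r → ℝ :=
  if j = maxI I then ee r r
  else if j = r then -(ee r (minI r I))
  else -(ee r (pI r I j))

/-- The signed permutation `d_I`, extended linearly. -/
def dI (r : ℕ) (I : Finset ℕ) (x : Fin r → ℝ) : Fin r → ℝ :=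
  ∑ j ∈ Finset.Icc 1 r, coordN r x j • dIb r I j

/-- The longest element `w_0` for `r` odd: `e_i ↦ -e_i` for `i < r`, `e_r ↦ e_r`. -/
def w0 (r : ℕ) (x : Fin r → ℝ) : Fin r → ℝ :=
  fun j => if (j : ℕ) + 1 = r then x j else -(x j)

/-- The set `A_I`. -/
def AI (r : ℕ) (I : Finset ℕ) : Set (Fin r → ℝ) :=
  {v | ∃ a b, a ∈ I ∧ a < b ∧ b < nextI r I a ∧ v = ee r b - ee r (nextI r I a)}

/-- The set `B_I`. -/
def BI (r : ℕ) (I : Finset ℕ) : Set (Fin r → ℝ) :=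
  {v | ∃ q, minI r I < q ∧ q ≤ r ∧ v = ee r (minI r I) - ee r q}

/-- `ν₀(u) = u(Π₊) ∩ Π₊`. -/
def nu0 (r : ℕ) (u : (Fin r → ℝ) → (Fin r → ℝ)) : Set (Fin r → ℝ) :=
  {β | β ∈ Pos r ∧ ∃ γ ∈ Pos r, u γ = β}

/-- Arrow `α → β` in the rationality graph of `u`: `u⁻¹(α) ≤ β`,
expressed via a positive preimage `γ` of `α`. -/
def Arrow (r : ℕ) (u : (Fin r → ℝ) → (Fin r → ℝ)) (α β : Fin r → ℝ) : Prop :=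
  ∃ γ ∈ Pos r, u γ = α ∧ rootLE r γ β

/-- The rationality graph of `u` has a directed cycle. -/
def HasCycle (r : ℕ) (u : (Fin r → ℝ) → (Fin r → ℝ)) : Prop :=
  ∃ (n : ℕ) (f : ℕ → (Fin r → ℝ)), 0 < n ∧ (∀ i ≤ n, f i ∈ nu0 r u) ∧
    f 0 = f n ∧ ∀ i < n, Arrow r u (f i) (f (i + 1))

/-- The simple reflection `s_a` for `1 ≤ a ≤ r-1`: swaps coordinates `a` and `a+1`. -/
def sw (r a : ℕ) (x : Fin r → ℝ) : Fin r → ℝ := fun j =>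
  if (j : ℕ) + 1 = a then coordN r x (a + 1)
  else if (j : ℕ) + 1 = a + 1 then coordN r x a
  else x j

/-- The spin reflection `s_r`: `e_{r-1} ↦ -e_r`, `e_r ↦ -e_{r-1}`. -/
def sSpin (r : ℕ) (x : Fin r → ℝ) : Fin r → ℝ := fun j =>
  if (j : ℕ) + 1 = r - 1 then -(coordN r x r)
  else if (j : ℕ) + 1 = r then -(coordN r x (r - 1))
  else x j


lemma coordN_ee (r a i : ℕ) (ha : 1 ≤ a) (har : a ≤ r) :
    coordN r (ee r a) i = if i = a then 1 else 0 := by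
  unfold coordN ee
  rcases eq_or_ne i a with h | h
  · subst h
    rw [if_pos rfl]
    have key : ∀ j : Fin r,
        (if (j : ℕ) + 1 = i then (if (j : ℕ) + 1 = i then (1:ℝ) else 0) else 0)
          = if j = (⟨i - 1, by omega⟩ : Fin r) then 1 else 0 := by
      intro j
      by_cases hj : (j : ℕ) + 1 = i
      · rw [if_pos hj, if_pos hj, if_pos (by apply Fin.ext; simp; omega)]
      · rw [if_neg hj, if_neg (by intro h; apply hj; rw [h]; simp; omega)]
    rw [Finset.sum_congr rfl (fun j _ => key j)]
    simp
  · rw [if_neg h]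
    apply Finset.sum_eq_zero
    intro j _
    by_cases hj : (j : ℕ) + 1 = i
    · rw [if_pos hj, if_neg (by omega)]
    · rw [if_neg hj]

lemma cI_ee (r : ℕ) (I : Finset ℕ) (a : ℕ) (ha : 1 ≤ a) (har : a ≤ r) :
    cI r I (ee r a) = cIb r I a := by
  unfold cI
  have key : ∀ j ∈ Finset.Icc 1 r, coordN r (ee r a) j • cIb r I j
      = if j = a then cIb r I a else 0 := by
    intro j _
    rw [coordN_ee r a j ha har]
    by_cases h : j = a <;> simp [h]
  rw [Finset.sum_congr rfl key, Finset.sum_ite_eq' (Finset.Icc 1 r) a fun _ => cIb r I a]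
  rw [if_pos (by simp [Finset.mem_Icc]; omega)]

lemma coordN_sub (r : ℕ) (x y : Fin r → ℝ) (i : ℕ) :
    coordN r (x - y) i = coordN r x i - coordN r y i := by
  unfold coordN
  rw [← Finset.sum_sub_distrib]
  apply Finset.sum_congr rfl
  intro k _
  by_cases h : (k : ℕ) + 1 = i <;> simp [h]

lemma coordN_add (r : ℕ) (x y : Fin r → ℝ) (i : ℕ) :
    coordN r (x + y) i = coordN r x i + coordN r y i := by
  unfold coordN
  rw [← Finset.sum_add_distrib]
  apply Finset.sum_congr rfl
  intro k _
  by_cases h : (k : ℕ) + 1 = i <;> simp [h]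

lemma cI_sub (r : ℕ) (I : Finset ℕ) (x y : Fin r → ℝ) :
    cI r I (x - y) = cI r I x - cI r I y := by
  unfold cI
  rw [← Finset.sum_sub_distrib]
  apply Finset.sum_congr rfl
  intro j _
  rw [coordN_sub, sub_smul]

lemma cI_add (r : ℕ) (I : Finset ℕ) (x y : Fin r → ℝ) :
    cI r I (x + y) = cI r I x + cI r I y := by
  unfold cI
  rw [← Finset.sum_add_distrib]
  apply Finset.sum_congr rfl
  intro j _
  rw [coordN_add, add_smul]

lemma nextI_min (r : ℕ) (I : Finset ℕ) (a b : ℕ) (hb : b ∈ insert r I) (hab : a < b) :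
    nextI r I a ≤ b := by
  unfold nextI
  have hbS : b ∈ (insert r I).filter (fun x => a < x) := by
    simp [Finset.mem_filter, hb, hab]
  have h := Finset.min_le hbS
  cases hmin : ((insert r I).filter (fun x => a < x)).min with
  | top => rw [hmin] at h; exact absurd h (by simp)
  | coe m => rw [hmin] at h; exact (by simpa using h : m ≤ b)

lemma nextI_le (r : ℕ) (I : Finset ℕ) (a : ℕ) (ha : a < r) : nextI r I a ≤ r :=
  nextI_min r I a r (Finset.mem_insert_self r I) ha

/-- `c_I⁻¹(e_b - e_{n_I(a)}) = e_a - e_b` and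
`c_I⁻¹(e_{i₁} - e_q) = e_t + e_r` where `p_I(t) = q`; stated equivalently in the
forward direction for the bijection `c_I`. -/
theorem stmt8 (r : ℕ) (hr : 5 ≤ r) (hodd : Odd r)
    (I : Finset ℕ) (hI : I.Nonempty) (hIs : I ⊆ Finset.Icc 1 (r - 1)) :
    (∀ a b, a ∈ I → a < b → b < nextI r I a →
      cI r I (ee r a - ee r b) = ee r b - ee r (nextI r I a)) ∧
    (∀ q t, minI r I < q → q ≤ r → 1 ≤ t → t ≤ r - 1 → pI r I t = q →
      cI r I (ee r t + ee r r) = ee r (minI r I) - ee r q) := by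
  constructor
  · intro a b haI hab hbn
    have haIcc := hIs haI
    rw [Finset.mem_Icc] at haIcc
    have ha1 : 1 ≤ a := haIcc.1
    have har : a < r := by omega
    have hnle : nextI r I a ≤ r := nextI_le r I a har
    have hbr : b < r := lt_of_lt_of_le hbn hnle
    have hbnI : b ∉ I := by
      intro hbI
      exact absurd (nextI_min r I a b (Finset.mem_insert_of_mem hbI) hab) (by omega)
    rw [cI_sub, cI_ee r I a (by omega) (by omega), cI_ee r I b (by omega) (by omega)]
    have hca : cIb r I a = -(ee r (nextI r I a)) := by
      unfold cIb pI
      rw [if_neg (by omega), if_pos haI]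
    have hcb : cIb r I b = -(ee r b) := by
      unfold cIb pI
      rw [if_neg (by omega), if_neg hbnI, if_neg (by omega)]
    rw [hca, hcb]
    abel
  · intro q t hq hqr ht1 htr hpt
    have htltr : t < r := by omega
    rw [cI_add, cI_ee r I t (by omega) (by omega), cI_ee r I r (by omega) le_rfl]
    have hct : cIb r I t = -(ee r q) := by
      unfold cIb
      rw [if_neg (by omega), hpt]
    have hcr : cIb r I r = ee r (minI r I) := by
      unfold cIb
      rw [if_pos rfl]
    rw [hct, hcr]
    abel

end
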